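/- arXiv:1508.01858 — 3 statements merged into one kernel-verified Lean document; each statement's English description precedes it below -/
import Mathlib

section
/- For every nonnegative integer n, the n-th Bernoulli-Carlitz number satisfies BC_n = Σ_{j ≥ 0, r^j − 1 ≤ n} ((−1)^j D_j / L_j^2) · S2_C(n, r^j − 1), where S2_C denotes the Stirling-Carlitz numbers of the second kind (the sum is finite since S2_C(n, m) = 0 whenever n < m). -/
/-!
Since `log_C` is the compositional inverse of `e_C`, `∑ⱼ (-1)ʲ/Lⱼ · e_C^{rʲ} = z`; dividing by
`e_C = z · (e_C/z)` shows that `∑ⱼ (-1)ʲ/Lⱼ · e_C^{rʲ-1}` is the inverse of `e_C/z`, i.e. the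
generating series of `BC_n/Π(n)`. Its `zⁿ` coefficient becomes the Stirling-Carlitz sum because
`Π(rʲ - 1) = Dⱼ/Lⱼ` (all base-`r` digits of `rʲ - 1` are `r - 1`).

The composition identity is checked coefficientwise: in characteristic `p`,
`e_C^{rʲ} = ∑ᵢ z^{r^{i+j}}/Dᵢ^{rʲ}`, and the coefficient of `z^{rᵏ}` is
`∑_{i+j=k} (-1)ʲ/(Lⱼ Dᵢ^{rʲ})`, which vanishes for `k ≥ 1` after multiplying by
`[k] = [i]^{rʲ} + [j]` and telescoping with `[i]/Dᵢ = 1/D_{i-1}^r`, `[j]/Lⱼ = 1/L_{j-1}`.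
-/

open scoped Classical
open PowerSeries Finset

noncomputable section

variable (F : Type) [Field F] [Fintype F]

/-- The rational function field `K = 𝔽_r(T)`. -/
abbrev K : Type := RatFunc F

/-- `r`, the cardinality of the finite field of constants. -/
def rr : ℕ := Fintype.card F

/-- The variable `T` of the rational function field. -/
def Tv : K F := RatFunc.X

/-- `[i] = T^{r^i} - T`. -/
def br (i : ℕ) : K F := Tv F ^ (rr F) ^ i - Tv F

/-- `D_0 = 1`, `D_i = [i] · D_{i-1}^r`. -/
def D : ℕ → K F
  | 0 => 1
  | i + 1 => br F (i + 1) * D i ^ rr F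

/-- `L_0 = 1`, `L_i = [i] · L_{i-1}`. -/
def L : ℕ → K F
  | 0 => 1
  | i + 1 => br F (i + 1) * L i

/-- The Carlitz factorial `Π(n) = ∏_j D_j^{c_j}`, where `c_j = n / r^j % r` are the
base-`r` digits of `n` (all digits with index `> n` vanish since `r ≥ 2`). -/
def Cf (n : ℕ) : K F := ∏ j ∈ Finset.range (n + 1), D F j ^ (n / (rr F) ^ j % rr F)

/-- The Carlitz logarithm `log_C(z) = Σ_{i ≥ 0} (-1)^i z^{r^i} / L_i`: the coefficient of
`z^m` is `(-1)^i / L_i` if `m = r^i` and `0` otherwise (note `i ≤ r^i = m` since `r ≥ 2`). -/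
def logC : PowerSeries (K F) :=
  PowerSeries.mk fun m =>
    ∑ i ∈ Finset.range (m + 1), if m = (rr F) ^ i then (-1 : K F) ^ i / L F i else 0

/-- The Carlitz exponential `e_C(z) = Σ_{i ≥ 0} z^{r^i} / D_i`. -/
def eC : PowerSeries (K F) :=
  PowerSeries.mk fun m =>
    ∑ i ∈ Finset.range (m + 1), if m = (rr F) ^ i then 1 / D F i else 0

/-- The power series `log_C(z)/z`. -/
def logCdivZ : PowerSeries (K F) :=
  PowerSeries.mk fun n => PowerSeries.coeff (n + 1) (logC F)

/-- The power series `e_C(z)/z`. -/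
def eCdivZ : PowerSeries (K F) :=
  PowerSeries.mk fun n => PowerSeries.coeff (n + 1) (eC F)

theorem PowerSeries.coeff_pow_expChar_pow {R : Type*} [CommRing R] (p : ℕ) [ExpChar R p]
    (f : PowerSeries R) (n m : ℕ) :
    coeff m (f ^ p ^ n) = if p ^ n ∣ m then coeff (m / p ^ n) f ^ p ^ n else 0 := by
  have hp : p ≠ 0 := expChar_ne_zero R p
  rw [← MvPowerSeries.map_iterateFrobenius_expand p hp f n]
  change coeff m (map (iterateFrobenius R p n) (expand (p ^ n) (pow_ne_zero n hp) f)) = _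
  rw [coeff_map, coeff_expand]
  split_ifs <;> simp [iterateFrobenius_def, hp]

lemma one_lt_rr : 1 < rr F := Fintype.one_lt_card

lemma rr_pos : 0 < rr F := Fintype.card_pos

lemma rr_pow_pos (j : ℕ) : 0 < rr F ^ j := pow_pos (rr_pos F) j

lemma lt_rr_pow (j : ℕ) : j < rr F ^ j := Nat.lt_pow_self (one_lt_rr F)

lemma rr_pow_injective : Function.Injective (rr F ^ ·) := Nat.pow_right_injective (one_lt_rr F)

lemma exists_expChar_rr_eq_pow : ∃ p s : ℕ, ExpChar (K F) p ∧ rr F = p ^ s := by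
  obtain ⟨p, hchar, s, hp, hcard⟩ := FiniteField.card' F
  have : Fact p.Prime := ⟨hp⟩
  exact ⟨p, s, inferInstance, hcard⟩

lemma sub_pow_rr_pow (x y : K F) (m : ℕ) :
    (x - y) ^ rr F ^ m = x ^ rr F ^ m - y ^ rr F ^ m := by
  obtain ⟨p, s, _, hr⟩ := exists_expChar_rr_eq_pow F
  rw [hr, ← pow_mul, sub_pow_expChar_pow]

lemma coeff_pow_rr_pow (f : PowerSeries (K F)) (j m : ℕ) :
    coeff m (f ^ rr F ^ j) = if rr F ^ j ∣ m then coeff (m / rr F ^ j) f ^ rr F ^ j else 0 := by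
  obtain ⟨p, s, _, hr⟩ := exists_expChar_rr_eq_pow F
  rw [hr, ← pow_mul, coeff_pow_expChar_pow]

lemma br_zero : br F 0 = 0 := by simp [br]

lemma br_ne_zero {i : ℕ} (hi : i ≠ 0) : br F i ≠ 0 := by
  have hdeg : (Polynomial.X ^ rr F ^ i - Polynomial.X : Polynomial F) ≠ 0 := by
    refine sub_ne_zero.mpr fun h => ?_
    have := congrArg Polynomial.natDegree h
    rw [Polynomial.natDegree_X_pow, Polynomial.natDegree_X] at this
    exact (Nat.one_lt_pow hi (one_lt_rr F)).ne' this
  simpa [br, Tv, ← RatFunc.algebraMap_X] using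
    (map_ne_zero_iff _ (RatFunc.algebraMap_injective F)).mpr hdeg

lemma br_add (i j : ℕ) : br F (i + j) = br F i ^ rr F ^ j + br F j := by
  rw [br, br, br, sub_pow_rr_pow, ← pow_mul, ← pow_add]
  ring

lemma D_ne_zero (i : ℕ) : D F i ≠ 0 := by
  induction i with
  | zero => exact one_ne_zero
  | succ i ih => exact mul_ne_zero (br_ne_zero F i.succ_ne_zero) (pow_ne_zero _ ih)

lemma L_ne_zero (i : ℕ) : L F i ≠ 0 := by
  induction i with
  | zero => exact one_ne_zero
  | succ i ih => exact mul_ne_zero (br_ne_zero F i.succ_ne_zero) ih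

lemma Cf_ne_zero (n : ℕ) : Cf F n ≠ 0 :=
  prod_ne_zero_iff.mpr fun i _ => pow_ne_zero _ (D_ne_zero F i)

lemma br_div_D_succ (i : ℕ) : br F (i + 1) / D F (i + 1) = (D F i ^ rr F)⁻¹ := by
  rw [D, div_mul_cancel_left₀ (br_ne_zero F i.succ_ne_zero)]

lemma br_div_L_succ (i : ℕ) : br F (i + 1) / L F (i + 1) = (L F i)⁻¹ := by
  rw [L, div_mul_cancel_left₀ (br_ne_zero F i.succ_ne_zero)]

lemma D_eq_L_mul_prod (j : ℕ) : D F j = L F j * ∏ i ∈ range j, D F i ^ (rr F - 1) := by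
  induction j with
  | zero => simp [D, L]
  | succ j ih =>
    have hr : rr F = rr F - 1 + 1 := by have := one_lt_rr F; omega
    rw [D, L, prod_range_succ]
    conv_lhs => rw [hr, pow_succ]
    nth_rewrite 2 [ih]
    ring

lemma rr_pow_sub_one_div_rr_pow_mod_rr (i j : ℕ) :
    (rr F ^ j - 1) / rr F ^ i % rr F = if i < j then rr F - 1 else 0 := by
  have hr := one_lt_rr F
  split_ifs with hij
  · obtain ⟨k, rfl⟩ : ∃ k, j = i + 1 + k := ⟨j - (i + 1), by omega⟩
    have ha := rr_pow_pos F i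
    have hb := rr_pow_pos F k
    have hq : (rr F ^ (i + 1 + k) - 1) / rr F ^ i = (rr F - 1) + rr F * (rr F ^ k - 1) := by
      have hrb : rr F - 1 + rr F * (rr F ^ k - 1) = rr F * rr F ^ k - 1 := by
        have : rr F ≤ rr F * rr F ^ k := Nat.le_mul_of_pos_right _ hb
        rw [Nat.mul_sub, mul_one]
        omega
      have hc : 0 < rr F * rr F ^ k := by positivity
      rw [hrb, pow_add, pow_succ, mul_assoc, mul_comm]
      generalize rr F * rr F ^ k = c at hc ⊢
      apply Nat.div_eq_of_lt_le
      · rw [Nat.sub_mul, one_mul, mul_comm]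
        omega
      · rw [Nat.sub_add_cancel hc, mul_comm c]
        exact Nat.sub_lt (by positivity) one_pos
    rw [hq, Nat.add_mul_mod_self_left, Nat.mod_eq_of_lt (by omega)]
  · have hlt : rr F ^ j - 1 < rr F ^ i := by
      have := Nat.pow_le_pow_right hr.le (not_lt.mp hij)
      have := rr_pow_pos F j
      omega
    rw [Nat.div_eq_of_lt hlt, Nat.zero_mod]

lemma Cf_rr_pow_sub_one (j : ℕ) : Cf F (rr F ^ j - 1) = D F j / L F j := by
  have hj : rr F ^ j - 1 + 1 = j + (rr F ^ j - j) := by have := lt_rr_pow F j; omega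
  have hlow : ∏ i ∈ range j, D F i ^ ((rr F ^ j - 1) / rr F ^ i % rr F)
      = ∏ i ∈ range j, D F i ^ (rr F - 1) :=
    prod_congr rfl fun i hi => by
      rw [rr_pow_sub_one_div_rr_pow_mod_rr, if_pos (mem_range.mp hi)]
  have hhigh : ∏ i ∈ range (rr F ^ j - j), D F (j + i) ^ ((rr F ^ j - 1) / rr F ^ (j + i) % rr F)
      = 1 :=
    prod_eq_one fun i _ => by rw [rr_pow_sub_one_div_rr_pow_mod_rr, if_neg (by omega), pow_zero]
  rw [Cf, hj, prod_range_add, hlow, hhigh, mul_one, D_eq_L_mul_prod,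
    mul_div_cancel_left₀ _ (L_ne_zero F j)]

lemma coeff_eC_rr_pow (i : ℕ) : coeff (rr F ^ i) (eC F) = (D F i)⁻¹ := by
  rw [eC, coeff_mk, sum_eq_single_of_mem i (mem_range.mpr (by have := lt_rr_pow F i; omega))
    fun k _ hki => if_neg fun h => hki (rr_pow_injective F h).symm, if_pos rfl, one_div]

lemma coeff_eC_of_forall_ne {m : ℕ} (hm : ∀ i, m ≠ rr F ^ i) : coeff m (eC F) = 0 := by
  rw [eC, coeff_mk]
  exact sum_eq_zero fun i _ => if_neg (hm i)

lemma coeff_rr_pow_eC_pow_rr_pow (j k : ℕ) :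
    coeff (rr F ^ k) (eC F ^ rr F ^ j) = if j ≤ k then (D F (k - j))⁻¹ ^ rr F ^ j else 0 := by
  rw [coeff_pow_rr_pow]
  by_cases hjk : j ≤ k
  · rw [if_pos (Nat.pow_dvd_pow _ hjk), if_pos hjk, Nat.pow_div hjk (rr_pos F), coeff_eC_rr_pow]
  · rw [if_neg (mt (Nat.pow_dvd_pow_iff_le_right (one_lt_rr F)).mp hjk), if_neg hjk]

lemma coeff_eC_pow_rr_pow_of_forall_ne {m : ℕ} (hm : ∀ i, m ≠ rr F ^ i) (j : ℕ) :
    coeff m (eC F ^ rr F ^ j) = 0 := by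
  rw [coeff_pow_rr_pow]
  split_ifs with hdvd
  · obtain ⟨c, rfl⟩ := hdvd
    rw [Nat.mul_div_cancel_left _ (rr_pow_pos F j),
      coeff_eC_of_forall_ne F fun i hc => hm (i + j) (by rw [hc, pow_add, mul_comm]),
      zero_pow (rr_pow_pos F j).ne']
  · rfl

lemma sum_antidiagonal_neg_one_pow_div_L_mul_inv_D_pow {k : ℕ} (hk : k ≠ 0) :
    ∑ ji ∈ antidiagonal k, (-1 : K F) ^ ji.1 / L F ji.1 * (D F ji.2)⁻¹ ^ rr F ^ ji.1 = 0 := by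
  obtain ⟨k, rfl⟩ := Nat.exists_eq_succ_of_ne_zero hk
  refine (mul_eq_zero.mp ?_).resolve_left (br_ne_zero F hk)
  have hsplit : ∀ ji ∈ antidiagonal (k + 1),
      br F (k + 1) * ((-1 : K F) ^ ji.1 / L F ji.1 * (D F ji.2)⁻¹ ^ rr F ^ ji.1)
        = (-1 : K F) ^ ji.1 / L F ji.1 * (br F ji.2 / D F ji.2) ^ rr F ^ ji.1
          + (-1 : K F) ^ ji.1 * (br F ji.1 / L F ji.1) * (D F ji.2)⁻¹ ^ rr F ^ ji.1 := by
    intro ji hji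
    rw [← mem_antidiagonal.mp hji, add_comm, br_add]
    ring
  rw [mul_sum, sum_congr rfl hsplit, sum_add_distrib, Nat.sum_antidiagonal_succ',
    Nat.sum_antidiagonal_succ]
  simp only [br_zero, zero_div, br_div_D_succ, br_div_L_succ, zero_pow (rr_pow_pos F _).ne',
    mul_zero, zero_mul, zero_add, ← sum_add_distrib]
  refine sum_eq_zero fun ji _ => ?_
  rw [pow_succ' (rr F), inv_pow]
  ring

lemma X_pow_dvd_sum_eC_pow_sub_X (N : ℕ) :
    X ^ rr F ^ N ∣ ∑ j ∈ range N, C ((-1 : K F) ^ j / L F j) * eC F ^ rr F ^ j - X := by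
  refine X_pow_dvd_iff.mpr fun m hm => ?_
  simp only [map_sub, map_sum, coeff_C_mul, coeff_X]
  by_cases hpow : ∃ k, m = rr F ^ k
  · obtain ⟨k, rfl⟩ := hpow
    have hkN : k + 1 ≤ N := (Nat.pow_lt_pow_iff_right (one_lt_rr F)).mp hm
    have hsum : ∑ j ∈ range N, (-1 : K F) ^ j / L F j * coeff (rr F ^ k) (eC F ^ rr F ^ j)
        = ∑ ji ∈ antidiagonal k, (-1 : K F) ^ ji.1 / L F ji.1 * (D F ji.2)⁻¹ ^ rr F ^ ji.1 := by
      simp only [coeff_rr_pow_eC_pow_rr_pow, mul_ite, mul_zero]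
      rw [← sum_range_add_sum_Ico _ hkN,
        sum_eq_zero (s := Ico _ _) fun j hj => if_neg (by have := (mem_Ico.mp hj).1; omega),
        add_zero, sum_congr rfl fun j hj => if_pos (Nat.lt_succ_iff.mp (mem_range.mp hj)),
        Nat.sum_antidiagonal_eq_sum_range_succ
          (fun j i => (-1 : K F) ^ j / L F j * (D F i)⁻¹ ^ rr F ^ j)]
    rw [hsum]
    rcases eq_or_ne k 0 with rfl | hk
    · simp [L, D]
    · rw [sum_antidiagonal_neg_one_pow_div_L_mul_inv_D_pow F hk,
        if_neg (Nat.one_lt_pow hk (one_lt_rr F)).ne', sub_zero]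
  · push Not at hpow
    rw [sum_eq_zero fun j _ => by rw [coeff_eC_pow_rr_pow_of_forall_ne F hpow, mul_zero],
      if_neg (by simpa using hpow 0), sub_zero]

lemma eC_eq_X_mul_eCdivZ : eC F = X * eCdivZ F := by
  ext m
  rcases m with _ | m
  · rw [coeff_zero_X_mul, coeff_eC_of_forall_ne F fun i h => (rr_pow_pos F i).ne h]
  · rw [coeff_succ_X_mul, eCdivZ, coeff_mk]

lemma X_pow_dvd_sum_eC_pow_mul_eCdivZ_sub_one (N : ℕ) :
    X ^ (rr F ^ N - 1) ∣
      (∑ j ∈ range N, C ((-1 : K F) ^ j / L F j) * eC F ^ (rr F ^ j - 1)) * eCdivZ F - 1 := by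
  have hX : X * ((∑ j ∈ range N, C ((-1 : K F) ^ j / L F j) * eC F ^ (rr F ^ j - 1))
        * eCdivZ F - 1) = ∑ j ∈ range N, C ((-1 : K F) ^ j / L F j) * eC F ^ rr F ^ j - X := by
    rw [mul_sub, mul_one, sum_mul, mul_sum]
    congr 1
    refine sum_congr rfl fun j _ => ?_
    rw [← pow_sub_one_mul (rr_pow_pos F j).ne', eC_eq_X_mul_eCdivZ]
    ring
  have h := X_pow_dvd_sum_eC_pow_sub_X F N
  rw [← hX, ← Nat.sub_add_cancel (rr_pow_pos F N), pow_succ'] at h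
  exact (mul_dvd_mul_iff_left X_ne_zero).mp h

lemma coeff_eC_pow_of_lt {n k : ℕ} (h : n < k) : coeff n (eC F ^ k) = 0 :=
  X_pow_dvd_iff.mp (pow_dvd_pow_of_dvd ⟨_, eC_eq_X_mul_eCdivZ F⟩ k) n h

/-- Theorem 2: `BC_n = Σ_{j ≥ 0, r^j - 1 ≤ n} ((-1)^j D_j / L_j^2) · S2_C(n, r^j - 1)`. -/
theorem bernoulliCarlitz_eq_sum_stirlingCarlitzSecond
    (BC : ℕ → K F) (S2C : ℕ → ℕ → K F)
    (hBC : (PowerSeries.mk fun n => BC n / Cf F n) * eCdivZ F = 1)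
    (hS2C : ∀ n k : ℕ,
      PowerSeries.coeff n (eC F ^ k) / Cf F k = S2C n k / Cf F n)
    (n : ℕ) :
    BC n = ∑ j ∈ (Finset.range (n + 1)).filter (fun j => (rr F) ^ j - 1 ≤ n),
      ((-1 : K F) ^ j * D F j / L F j ^ 2) * S2C n ((rr F) ^ j - 1) := by
  set A := PowerSeries.mk fun n => BC n / Cf F n
  set P := ∑ j ∈ range (n + 1), C ((-1 : K F) ^ j / L F j) * eC F ^ (rr F ^ j - 1)
  have hS2C' (k : ℕ) : S2C n k = Cf F n / Cf F k * coeff n (eC F ^ k) := by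
    rw [div_mul_comm, hS2C, div_mul_cancel₀ _ (Cf_ne_zero F n)]
  -- `A` is the inverse of `e_C(z)/z`, and `P` agrees with it up to `z^n`
  have hPA : X ^ (n + 1) ∣ P - A := by
    have hle : n + 1 ≤ rr F ^ (n + 1) - 1 := by have := lt_rr_pow F (n + 1); omega
    refine (pow_dvd_pow X hle).trans
      ((X_pow_dvd_sum_eC_pow_mul_eCdivZ_sub_one F (n + 1)).trans ⟨A, ?_⟩)
    linear_combination -P * hBC
  have hcoeff : BC n / Cf F n = coeff n P := by
    have := X_pow_dvd_iff.mp hPA n n.lt_succ_self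
    rwa [map_sub, coeff_mk, sub_eq_zero, eq_comm] at this
  calc BC n = Cf F n * coeff n P := by rw [← hcoeff, mul_div_cancel₀ _ (Cf_ne_zero F n)]
    _ = ∑ j ∈ range (n + 1), ((-1 : K F) ^ j * D F j / L F j ^ 2) * S2C n (rr F ^ j - 1) := by
      simp only [P, map_sum, coeff_C_mul, mul_sum, hS2C', Cf_rr_pow_sub_one]
      refine sum_congr rfl fun j _ => ?_
      field_simp [D_ne_zero F j, L_ne_zero F j]
    _ = _ := by
      refine (sum_filter_of_ne fun j _ hj => not_lt.mp fun hlt => hj ?_).symm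
      rw [hS2C', coeff_eC_pow_of_lt F hlt, mul_zero, mul_zero]
end
end

section
/- For every integer n ≥ 1, the n-th Cauchy number satisfies c_n = (−1)^n · n! · Σ_{k=1}^{n} (−1)^k binom(n+1, k+1) Σ 1/(i_1 ⋯ i_k), where the inner sum runs over all k-tuples of integers i_1, …, i_k ≥ 1 with i_1 + ⋯ + i_k = n + k. -/
open scoped Classical
open PowerSeries Finset

noncomputable section

/-- The formal power series `log(1+z) = Σ_{m ≥ 1} (-1)^{m-1} z^m / m` in `ℚ⟦z⟧`. -/
def log1p : PowerSeries ℚ :=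
  PowerSeries.mk fun m => if m = 0 then 0 else (-1 : ℚ) ^ (m - 1) / m

/-- The formal power series `log(1+z)/z` in `ℚ⟦z⟧`. -/
def log1pDivZ : PowerSeries ℚ :=
  PowerSeries.mk fun n => PowerSeries.coeff (n + 1) log1p

/-- The formal power series `-log(1-t) = Σ_{m ≥ 1} t^m / m` in `ℚ⟦t⟧`. -/
def negLog1m : PowerSeries ℚ :=
  PowerSeries.mk fun m => if m = 0 then 0 else 1 / (m : ℚ)

/-!
With `u = 1 - log(1+z)/z`, which has no constant term, the hypothesis says that the exponential
generating function of the `c_n` is `Σ_k u^k`, and its `n`-th coefficient only involves `k ≤ n`.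
Since `z u = z - log(1+z)`, the binomial theorem reduces the coefficients of `u^k` to those of
`(-log(1+z))^j`, which after `z ↦ -z` are the coefficients of `(-log(1-z))^j = (Σ_{m≥1} z^m/m)^j`,
i.e. sums of `1/(i_1 ⋯ i_j)` over compositions. Finally `Σ_{j ≤ k ≤ n} C(k, j) = C(n+1, j+1)`.
-/

namespace PowerSeries

variable {R : Type*}

theorem coeff_pow_eq_sum_finAntidiagonal [CommSemiring R] (k n : ℕ) (φ : R⟦X⟧) :
    coeff n (φ ^ k) = ∑ i ∈ finAntidiagonal k n, ∏ t, coeff (i t) φ := by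
  rw [← Fin.prod_const, coeff_prod]
  refine sum_nbij' (⇑) Finsupp.equivFunOnFinite.symm ?_ ?_ ?_ ?_ ?_ <;> intro i _ <;>
    simp_all [mem_finsuppAntidiag]

theorem coeff_eq_sum_coeff_pow_of_mul_one_sub_eq_one [CommRing R] {A u : R⟦X⟧}
    (hu : constantCoeff u = 0) (h : A * (1 - u) = 1) (n : ℕ) :
    coeff n A = ∑ k ∈ range (n + 1), coeff n (u ^ k) := by
  have hA : A = ∑ k ∈ range (n + 1), u ^ k + A * u ^ (n + 1) := by
    linear_combination (∑ k ∈ range (n + 1), u ^ k) * h + A * geom_sum_mul u (n + 1)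
  have htail : coeff n (A * u ^ (n + 1)) = 0 :=
    X_pow_dvd_iff.1 ((pow_dvd_pow_of_dvd (X_dvd_iff.2 hu) _).mul_left A) n n.lt_succ_self
  rw [hA, map_add, htail, add_zero, map_sum]

theorem coeff_one_sub_pow [CommRing R] (f : R⟦X⟧) (n k : ℕ) :
    coeff n ((1 - f) ^ k) =
      ∑ j ∈ range (k + 1), (k.choose j : R) * coeff (n + j) ((-(X * f)) ^ j) := by
  have hshift : coeff n ((1 - f) ^ k) = coeff (n + k) ((-(X * f) + X) ^ k) := by
    rw [← coeff_X_pow_mul _ k n, ← mul_pow]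
    congr 2
    ring
  rw [hshift, add_pow, map_sum]
  refine sum_congr rfl fun j hj => ?_
  have hjk : j ≤ k := Nat.lt_succ_iff.1 (mem_range.1 hj)
  rw [← map_natCast (C (R := R)), coeff_mul_C, coeff_mul_X_pow', if_pos (by omega),
    show n + k - (k - j) = n + j by omega, mul_comm]

end PowerSeries

theorem sum_range_sum_range_choose_mul {R : Type*} [NonAssocSemiring R] (a : ℕ → R) (n : ℕ) :
    ∑ k ∈ range (n + 1), ∑ j ∈ range (k + 1), (k.choose j : R) * a j =
      ∑ j ∈ range (n + 1), ((n + 1).choose (j + 1) : R) * a j := by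
  rw [sum_comm' (t' := range (n + 1)) (s' := fun j => Icc j n)
    (by intro k j; simp only [mem_range, mem_Icc]; omega)]
  refine sum_congr rfl fun j _ => ?_
  rw [← sum_mul, ← Nat.cast_sum, Nat.sum_Icc_choose]

theorem X_mul_log1pDivZ : X * log1pDivZ = log1p := by
  ext (_ | m)
  · simp [log1p]
  · simp [coeff_succ_X_mul, log1pDivZ]

theorem constantCoeff_log1pDivZ : constantCoeff log1pDivZ = 1 := by
  simp [log1pDivZ, log1p, ← coeff_zero_eq_constantCoeff_apply]

theorem neg_log1p_eq_rescale : -log1p = rescale (-1) negLog1m := by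
  ext (_ | m)
  · simp [log1p, negLog1m]
  · simp [log1p, negLog1m, coeff_rescale, pow_succ, div_eq_mul_inv]

-- `(0 : ℚ)⁻¹ = 0` makes this hold at `m = 0` as well.
theorem coeff_negLog1m (m : ℕ) : coeff m negLog1m = (m : ℚ)⁻¹ := by
  by_cases hm : m = 0 <;> simp [negLog1m, hm]

theorem coeff_negLog1m_pow (k N : ℕ) :
    coeff N (negLog1m ^ k) =
      ∑ i ∈ (Fintype.piFinset fun _ : Fin k => Icc 1 N).filter (fun i => ∑ t, i t = N),
        1 / ∏ t, (i t : ℚ) := by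
  simp only [coeff_pow_eq_sum_finAntidiagonal, coeff_negLog1m, one_div, prod_inv_distrib]
  symm
  -- Tuples with a zero entry contribute `(0 : ℚ)⁻¹ = 0`.
  refine sum_subset (fun i hi => ?_) (fun i hi hi' => ?_)
  · simp_all
  · obtain ⟨t, ht⟩ : ∃ t, i t = 0 := by
      by_contra! hpos
      refine hi' (mem_filter.2 ⟨Fintype.mem_piFinset.2 fun t => mem_Icc.2 ⟨?_, ?_⟩, ?_⟩)
      · exact Nat.one_le_iff_ne_zero.2 (hpos t)
      · exact (mem_finAntidiagonal.1 hi).symm ▸ single_le_sum (by simp) (mem_univ t)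
      · exact mem_finAntidiagonal.1 hi
    rw [prod_eq_zero (mem_univ t) (by simp [ht]), inv_zero]

/-- Proposition 1: for `n ≥ 1`,
`c_n = (-1)^n n! Σ_{k=1}^n (-1)^k C(n+1, k+1) Σ_{i_1,…,i_k ≥ 1, i_1+⋯+i_k = n+k} 1/(i_1 ⋯ i_k)`. -/
theorem cauchy_eq_sum_over_tuples_with_binom
    (c : ℕ → ℚ)
    (hc : (PowerSeries.mk fun n => c n / n.factorial) * log1pDivZ = 1)
    (n : ℕ) (hn : 1 ≤ n) :
    c n = (-1 : ℚ) ^ n * n.factorial * ∑ k ∈ Finset.Icc 1 n,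
      (-1 : ℚ) ^ k * (Nat.choose (n + 1) (k + 1) : ℚ) *
      ∑ i ∈ (Fintype.piFinset fun _ : Fin k => Finset.Icc 1 (n + k)).filter
          (fun i => ∑ t, i t = n + k),
        1 / ∏ t, (i t : ℚ) := by
  set T : ℕ → ℚ := fun j => coeff (n + j) (negLog1m ^ j) with hT
  have hgeom : c n / n.factorial = ∑ k ∈ range (n + 1), coeff n ((1 - log1pDivZ) ^ k) := by
    rw [← coeff_eq_sum_coeff_pow_of_mul_one_sub_eq_one (by simp [constantCoeff_log1pDivZ])
      (by rwa [sub_sub_cancel]), coeff_mk]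
  have hbinom (k : ℕ) : coeff n ((1 - log1pDivZ) ^ k) =
      ∑ j ∈ range (k + 1), (k.choose j : ℚ) * ((-1) ^ (n + j) * T j) := by
    simp only [coeff_one_sub_pow, X_mul_log1pDivZ, neg_log1p_eq_rescale, ← map_pow,
      coeff_rescale, hT]
  have hT0 : T 0 = 0 := by simp [hT, coeff_one, Nat.one_le_iff_ne_zero.1 hn]
  calc c n = n.factorial * (c n / n.factorial) := by field_simp
    _ = n.factorial *
        ∑ j ∈ range (n + 1), ((n + 1).choose (j + 1) : ℚ) * ((-1) ^ (n + j) * T j) := by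
      rw [hgeom, sum_congr rfl fun k _ => hbinom k, sum_range_sum_range_choose_mul]
    _ = n.factorial *
        ∑ j ∈ Icc 1 n, ((n + 1).choose (j + 1) : ℚ) * ((-1) ^ (n + j) * T j) := by
      rw [range_eq_Ico, sum_eq_sum_Ico_succ_bot n.add_one_pos, hT0, mul_zero, mul_zero, zero_add,
        zero_add, Ico_add_one_right_eq_Icc]
    _ = _ := by
      rw [mul_sum, mul_sum]
      refine sum_congr rfl fun j _ => ?_
      simp only [hT, coeff_negLog1m_pow]
      ring
end
end

section
/- For all integers n ≥ 1 and m ≥ 1, the n-th Cauchy number of order m satisfies c_n^{(m)} = (−1)^n Σ_{k=1}^{n} (−1)^k binom(n+1, k+1) Σ [ multinomial(n; i_1, …, i_k) / (binom(i_1+m, m) ⋯ binom(i_k+m, m)) ] · S1(i_1+m, m) ⋯ S1(i_k+m, m), where the inner sum runs over all k-tuples of integers i_1, …, i_k ≥ 0 with i_1 + ⋯ + i_k = n, multinomial(n; i_1,…,i_k) = n!/(i_1! ⋯ i_k!), and S1 denotes the unsigned Stirling numbers of the first kind. -/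
/-! Write `G = (log(1+z)/z)^m`, so that `Σ c_n^{(m)} z^n/n! = G⁻¹`. The polynomial identity
`x · Σ_{k=0}^{n} (-1)^k C(n+1,k+1) x^k = 1 - (1-x)^{n+1}`, applied to `x = G` and multiplied by
`G⁻¹`, gives `G⁻¹ ≡ Σ_{k=0}^{n} (-1)^k C(n+1,k+1) G^k` modulo `z^{n+1}`, since `z ∣ 1 - G`.
The coefficient of `z^n` in `G^k` is a sum over `k`-tuples of products of coefficients of `G`,
and `log(1+z) = -(-log(1-t))|_{t=-z}` makes the coefficient of `z^i` in `G` equal to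
`(-1)^i S1(i+m,m) / (C(i+m,m) i!)`. -/

open scoped Classical
open PowerSeries Finset

noncomputable section

theorem Finset.piAntidiag_univ_fin_eq_filter_piFinset (k n : ℕ) :
    piAntidiag (univ : Finset (Fin k)) n =
      (Fintype.piFinset fun _ : Fin k => range (n + 1)).filter (fun i => ∑ t, i t = n) := by
  ext i
  simp only [mem_piAntidiag, mem_univ, implies_true, and_true, mem_filter, Fintype.mem_piFinset,
    mem_range, iff_and_self]
  rintro rfl t
  exact Nat.lt_succ_of_le (single_le_sum (fun _ _ => Nat.zero_le _) (mem_univ t))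

theorem PowerSeries.coeff_pow_eq_sum_piAntidiag {R : Type*} [CommSemiring R] (φ : R⟦X⟧)
    (k n : ℕ) :
    coeff n (φ ^ k) = ∑ i ∈ piAntidiag (univ : Finset (Fin k)) n, ∏ t, coeff (i t) φ := by
  rw [← Fin.prod_const, coeff_prod, finsuppAntidiag, sum_map]
  exact sum_attach _ fun i : Fin k → ℕ => ∏ t, coeff (i t) φ

theorem one_sub_one_sub_pow_eq_mul_sum {R : Type*} [CommRing R] (x : R) (n : ℕ) :
    1 - (1 - x) ^ (n + 1) =
      x * ∑ k ∈ range (n + 1), (-1) ^ k * ((n + 1).choose (k + 1) : R) * x ^ k := by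
  rw [sub_eq_neg_add 1 x, add_pow, sum_range_succ', mul_sum]
  simp only [one_pow, mul_one, pow_zero, Nat.choose_zero_right, Nat.cast_one]
  rw [sub_add_cancel_right, ← sum_neg_distrib]
  refine sum_congr rfl fun k _ => ?_
  ring

theorem PowerSeries.coeff_eq_sum_choose_mul_coeff_pow_of_mul_eq_one {R : Type*} [CommRing R]
    {φ ψ : R⟦X⟧} (hψφ : ψ * φ = 1) (hφ : constantCoeff φ = 1) (n : ℕ) :
    coeff n ψ = ∑ k ∈ range (n + 1), (-1) ^ k * ((n + 1).choose (k + 1) : R) * coeff n (φ ^ k) := by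
  set P := ∑ k ∈ range (n + 1), (-1) ^ k * ((n + 1).choose (k + 1) : R⟦X⟧) * φ ^ k
  have hP : P = ψ - ψ * (1 - φ) ^ (n + 1) :=
    calc P = ψ * (φ * P) := by rw [← mul_assoc, hψφ, one_mul]
      _ = ψ * (1 - (1 - φ) ^ (n + 1)) := by rw [one_sub_one_sub_pow_eq_mul_sum]
      _ = ψ - ψ * (1 - φ) ^ (n + 1) := by ring
  have hX : X ^ (n + 1) ∣ ψ * (1 - φ) ^ (n + 1) :=
    dvd_mul_of_dvd_right (pow_dvd_pow_of_dvd (X_dvd_iff.2 (by simp [hφ])) _) ψ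
  have hcoeffP : coeff n P = coeff n ψ := by
    rw [hP, map_sub, X_pow_dvd_iff.1 hX n (Nat.lt_succ_self n), sub_zero]
  rw [← hcoeffP, map_sum]
  refine sum_congr rfl fun k _ => ?_
  rw [show (-1 : R⟦X⟧) ^ k * ((n + 1).choose (k + 1) : R⟦X⟧) =
      C ((-1) ^ k * ((n + 1).choose (k + 1) : R)) by simp, coeff_C_mul]

theorem log1p_eq_neg_rescale_negLog1m : log1p = -rescale (-1) negLog1m := by
  ext n
  simp only [log1p, negLog1m, map_neg, coeff_rescale, coeff_mk]
  rcases n with _ | n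
  · simp
  · simp only [Nat.add_one_ne_zero, if_false, Nat.add_sub_cancel, pow_succ]
    ring

theorem coeff_log1pDivZ_pow (i m : ℕ) :
    coeff i (log1pDivZ ^ m) = (-1) ^ i * coeff (i + m) (negLog1m ^ m) := by
  have hsign : (-1 : ℚ⟦X⟧) ^ m = C ((-1) ^ m) := by simp
  rw [← coeff_X_pow_mul _ m i, ← mul_pow, X_mul_log1pDivZ, log1p_eq_neg_rescale_negLog1m, neg_pow,
    hsign, ← map_pow, coeff_C_mul, coeff_rescale, ← mul_assoc, ← pow_add,
    show m + (i + m) = i + 2 * m by ring, pow_add, pow_mul, neg_one_sq, one_pow, mul_one]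

theorem coeff_log1pDivZ_pow_eq_stirling (S1 : ℕ → ℕ → ℚ)
    (hS1 : ∀ n k : ℕ, coeff n (negLog1m ^ k) / k.factorial = S1 n k / n.factorial) (i m : ℕ) :
    coeff i (log1pDivZ ^ m) =
      (-1) ^ i * (S1 (i + m) m / ((i + m).choose m * i.factorial)) := by
  have hchoose : ((i + m).choose m * i.factorial * m.factorial : ℚ) = (i + m).factorial := by
    exact_mod_cast Nat.add_choose_mul_factorial_mul_factorial i m
  have h := hS1 (i + m) m
  rw [← hchoose] at h
  rw [coeff_log1pDivZ_pow]
  field_simp at h ⊢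
  exact h

theorem multinomial_div_prod_choose_mul_prod_stirling_eq (S1 : ℕ → ℕ → ℚ)
    (hS1 : ∀ n k : ℕ, coeff n (negLog1m ^ k) / k.factorial = S1 n k / n.factorial)
    {k n : ℕ} (m : ℕ) {i : Fin k → ℕ} (hi : ∑ t, i t = n) :
    (n.factorial : ℚ) / (∏ t, ((i t).factorial : ℚ)) / (∏ t, ((i t + m).choose m : ℚ)) *
        ∏ t, S1 (i t + m) m =
      (-1) ^ n * n.factorial * ∏ t, coeff (i t) (log1pDivZ ^ m) := by
  simp only [coeff_log1pDivZ_pow_eq_stirling S1 hS1, prod_mul_distrib, prod_pow_eq_pow_sum, hi,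
    prod_div_distrib]
  rw [mul_mul_mul_comm, ← pow_add, ← two_mul, pow_mul, neg_one_sq, one_pow, one_mul]
  ring

theorem cauchyHigherOrder_eq_sum_over_tuples_with_binom_general
    (cho : ℕ → ℕ → ℚ) (S1 : ℕ → ℕ → ℚ)
    (hcho : ∀ m : ℕ,
      (PowerSeries.mk fun n => cho m n / n.factorial) * log1pDivZ ^ m = 1)
    (hS1 : ∀ n k : ℕ,
      PowerSeries.coeff n (negLog1m ^ k) / k.factorial = S1 n k / n.factorial)
    (n m : ℕ) (hn : 1 ≤ n) :
    cho m n = (-1 : ℚ) ^ n * ∑ k ∈ Finset.Icc 1 n,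
      (-1 : ℚ) ^ k * (Nat.choose (n + 1) (k + 1) : ℚ) *
      ∑ i ∈ (Fintype.piFinset fun _ : Fin k => Finset.range (n + 1)).filter
          (fun i => ∑ t, i t = n),
        ((n.factorial : ℚ) / ∏ t, ((i t).factorial : ℚ)) /
            (∏ t, (Nat.choose (i t + m) m : ℚ)) *
          ∏ t, S1 (i t + m) m := by
  have hinner (k : ℕ) :
      ∑ i ∈ (Fintype.piFinset fun _ : Fin k => range (n + 1)).filter (fun i => ∑ t, i t = n),
        (n.factorial : ℚ) / (∏ t, ((i t).factorial : ℚ)) / (∏ t, ((i t + m).choose m : ℚ)) *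
          ∏ t, S1 (i t + m) m =
        (-1) ^ n * n.factorial * coeff n ((log1pDivZ ^ m) ^ k) := by
    rw [← piAntidiag_univ_fin_eq_filter_piFinset, coeff_pow_eq_sum_piAntidiag, mul_sum]
    exact sum_congr rfl fun i hi =>
      multinomial_div_prod_choose_mul_prod_stirling_eq S1 hS1 m (mem_piAntidiag.1 hi).1
  have hcho_n : cho m n = n.factorial * coeff n (mk fun n => cho m n / n.factorial) := by
    rw [coeff_mk, mul_div_cancel₀ _ (Nat.cast_ne_zero.2 n.factorial_ne_zero)]
  have hG : constantCoeff (log1pDivZ ^ m) = 1 := by rw [map_pow, constantCoeff_log1pDivZ, one_pow]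
  have hsign : (-1 : ℚ) ^ n * (-1) ^ n = 1 := by rw [← mul_pow, neg_one_mul, neg_neg, one_pow]
  rw [hcho_n, coeff_eq_sum_choose_mul_coeff_pow_of_mul_eq_one (hcho m) hG]
  simp only [hinner]
  rw [range_eq_Ico, sum_eq_sum_Ico_succ_bot (by omega), pow_zero, pow_zero, coeff_one,
    if_neg (by omega), mul_zero, zero_add, zero_add, Ico_add_one_right_eq_Icc, mul_sum, mul_sum]
  refine sum_congr rfl fun k _ => ?_
  linear_combination (-(-1) ^ k * ((n + 1).choose (k + 1) : ℚ) * n.factorial *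
    coeff n ((log1pDivZ ^ m) ^ k)) * hsign

/-- Proposition 4: for `n, m ≥ 1`, the Cauchy number of order `m` satisfies
`c_n^{(m)} = (-1)^n Σ_{k=1}^n (-1)^k C(n+1, k+1) Σ_{i_1,…,i_k ≥ 0, i_1+⋯+i_k = n}
  (n!/(i_1!⋯i_k!)) / (C(i_1+m, m)⋯C(i_k+m, m)) · S1(i_1+m, m)⋯S1(i_k+m, m)`. -/
theorem cauchyHigherOrder_eq_sum_over_tuples_with_binom
    (cho : ℕ → ℕ → ℚ) (S1 : ℕ → ℕ → ℚ)
    (hcho : ∀ m : ℕ,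
      (PowerSeries.mk fun n => cho m n / n.factorial) * log1pDivZ ^ m = 1)
    (hS1 : ∀ n k : ℕ,
      PowerSeries.coeff n (negLog1m ^ k) / k.factorial = S1 n k / n.factorial)
    (n m : ℕ) (hn : 1 ≤ n) (hm : 1 ≤ m) :
    cho m n = (-1 : ℚ) ^ n * ∑ k ∈ Finset.Icc 1 n,
      (-1 : ℚ) ^ k * (Nat.choose (n + 1) (k + 1) : ℚ) *
      ∑ i ∈ (Fintype.piFinset fun _ : Fin k => Finset.range (n + 1)).filter
          (fun i => ∑ t, i t = n),
        ((n.factorial : ℚ) / ∏ t, ((i t).factorial : ℚ)) /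
            (∏ t, (Nat.choose (i t + m) m : ℚ)) *
          ∏ t, S1 (i t + m) m :=
  cauchyHigherOrder_eq_sum_over_tuples_with_binom_general cho S1 hcho hS1 n m hn
end
end
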